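/- arXiv:1201.2712 — 6 statements merged into one kernel-verified Lean document; each statement's English description precedes it below -/
import Mathlib

section
/- For every integer k ≥ 2, there exists a digraph D with an arc-coloring using k+1 colors such that D has no k-colored kernel. Concretely, the directed cycle on 2k+2 vertices u_0,...,u_{2k+1} in which the arcs (u_{2i},u_{2i+1}) and (u_{2i+1},u_{2i+2}) receive color i for 0 ≤ i ≤ k (indices mod 2k+2) has no k-colored kernel. -/
variable {V : Type*}

/-- `l` is a directed path from `u` to `v` in the digraph with arc relation `A`:
a nonempty list of distinct vertices, consecutive ones joined by arcs,
starting at `u` and ending at `v`. -/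
def IsPathFrom (A : V → V → Prop) (u v : V) (l : List V) : Prop :=
  l.Chain' A ∧ l.Nodup ∧ l.head? = some u ∧ l.getLast? = some v

/-- The set of colors used by the consecutive arcs of the list `l`. -/
def listColors (col : V → V → ℕ) (l : List V) : Finset ℕ :=
  ((l.zip l.tail).map fun p => col p.1 p.2).toFinset

/-- There is a directed path from `u` to `v` using at most `k` colors. -/
def ReachK (A : V → V → Prop) (col : V → V → ℕ) (k : ℕ) (u v : V) : Prop :=
  ∃ l, IsPathFrom A u v l ∧ (listColors col l).card ≤ k

/-- There is a directed path from `u` to `v`. -/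
def Reach (A : V → V → Prop) (u v : V) : Prop :=
  ∃ l, IsPathFrom A u v l

/-- A nonempty list `l` of distinct vertices is a directed cycle:
consecutive vertices are joined by arcs, and there is a closing arc from
the last vertex back to the first one. -/
def IsCycle (A : V → V → Prop) (l : List V) : Prop :=
  l ≠ [] ∧ l.Chain' A ∧ l.Nodup ∧
    ∀ a b, l.getLast? = some a → l.head? = some b → A a b

/-- The set of colors of the arcs of the cycle `l` (including the closing arc). -/
def cycleColors (col : V → V → ℕ) (l : List V) : Finset ℕ :=
  listColors col (l ++ l.take 1)

/-- `(u,v)` is one of the arcs of the cycle `l`. -/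
def ArcOfCycle (l : List V) (u v : V) : Prop :=
  (u, v) ∈ l.zip l.tail ∨ (l.getLast? = some u ∧ l.head? = some v)

/-- `K` is a `k`-colored kernel of the digraph `A` arc-colored by `col`:
no directed path using at most `k` colors joins two distinct vertices of `K`,
and every vertex outside of `K` has a directed path using at most `k` colors
to some vertex of `K`. -/
def IsKColoredKernel (A : V → V → Prop) (col : V → V → ℕ) (k : ℕ) (K : Set V) : Prop :=
  (∀ u ∈ K, ∀ v ∈ K, u ≠ v → ¬ ReachK A col k u v) ∧
  (∀ u, u ∉ K → ∃ v ∈ K, ReachK A col k u v)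

/-- The arc relation of the `k`-colored closure of the digraph `A` colored by `col`. -/
def ClosureArc (A : V → V → Prop) (col : V → V → ℕ) (k : ℕ) (u v : V) : Prop :=
  u ≠ v ∧ ReachK A col k u v

/-- `K` is a kernel of the digraph with arc relation `B`. -/
def IsKernel (B : V → V → Prop) (K : Set V) : Prop :=
  (∀ u ∈ K, ∀ v ∈ K, u ≠ v → ¬ B u v) ∧ (∀ u, u ∉ K → ∃ v ∈ K, B u v)

/-! In the directed cycle on `ZMod (2k+2)` the path from `u` to `v` is unique and has
`(v - u).val` arcs; the arc leaving `w` has color `w.val / 2`, so the two vertices `2c, 2c+1`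
share a color and a path with `d` arcs uses at most `d / 2 + 1` colors. Of the two paths between
distinct vertices one has at most `k + 1 < 2k` arcs, hence at most `k` colors, so a `k`-colored
kernel is a single vertex `v`. Then `v + 1` must be absorbed by `v`, but the path from `v + 1` to
`v` leaves every vertex other than `v`, so it meets every color class and uses `k + 1` colors. -/

theorem List.map_fst_zip_tail {α : Type*} (l : List α) :
    (l.zip l.tail).map Prod.fst = l.dropLast := by
  induction l with
  | nil => rfl
  | cons a t ih =>
    cases t with
    | nil => rfl
    | cons b t => simp_all

theorem listColors_eq_toFinset_map_dropLast (f : V → ℕ) (l : List V) :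
    listColors (fun u _ => f u) l = (l.dropLast.map f).toFinset := by
  rw [listColors, ← List.map_fst_zip_tail, List.map_map]
  rfl

section CyclePaths

variable {n : ℕ}

def cycleSegment (u : ZMod n) (m : ℕ) : List (ZMod n) :=
  (List.range m).map fun i : ℕ => u + (i : ZMod n)

@[simp]
theorem length_cycleSegment (u : ZMod n) (m : ℕ) : (cycleSegment u m).length = m := by
  simp [cycleSegment]

@[simp]
theorem getElem_cycleSegment (u : ZMod n) (m i : ℕ) (hi : i < (cycleSegment u m).length) :
    (cycleSegment u m)[i] = u + i := by
  simp [cycleSegment]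

theorem dropLast_cycleSegment (u : ZMod n) (m : ℕ) :
    (cycleSegment u (m + 1)).dropLast = cycleSegment u m := by
  simp [cycleSegment, List.range_succ]

theorem IsPathFrom.eq_cycleSegment {u v : ZMod n} {l : List (ZMod n)}
    (h : IsPathFrom (fun a b => b = a + 1) u v l) : l = cycleSegment u l.length := by
  obtain ⟨hc, -, hu, -⟩ := h
  refine List.ext_getElem (by simp) fun i hi _ => ?_
  induction i with
  | zero => simp [List.head?_eq_getElem?, hi] at hu; simp [hu]
  | succ i ih =>
    rw [List.isChain_iff_getElem.mp hc i hi, ih (by omega) (by simp; omega)]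
    simp [add_assoc]

theorem isPathFrom_cycleSegment [NeZero n] (u : ZMod n) {m : ℕ} (hm : m < n) :
    IsPathFrom (fun a b => b = a + 1) u (u + m) (cycleSegment u (m + 1)) := by
  refine ⟨List.isChain_iff_getElem.mpr fun i hi => by simp [add_assoc], ?_, ?_, ?_⟩
  · refine List.Nodup.map_on (fun i hi j hj hij => ?_) List.nodup_range
    rw [List.mem_range] at hi hj
    simpa [Nat.mod_eq_of_lt, hi.trans_le hm, hj.trans_le hm] using
      congrArg ZMod.val (add_left_cancel hij)
  · simp [List.head?_eq_getElem?]
  · simp [List.getLast?_eq_getElem?]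

theorem IsPathFrom.exists_eq_cycleSegment [NeZero n] {u v : ZMod n} {l : List (ZMod n)}
    (h : IsPathFrom (fun a b => b = a + 1) u v l) :
    ∃ m < n, l = cycleSegment u (m + 1) ∧ v = u + m := by
  have hl := h.eq_cycleSegment
  obtain ⟨-, hnd, hu, hv⟩ := h
  obtain ⟨m, hm⟩ : ∃ m, l.length = m + 1 :=
    Nat.exists_eq_add_one.mpr (List.length_pos_iff.mpr (by rintro rfl; simp at hu))
  have hlen : l.length ≤ n := by simpa using hnd.length_le_card
  rw [hm] at hl
  refine ⟨m, by omega, hl, ?_⟩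
  rw [hl] at hv
  simpa [List.getLast?_eq_getElem?] using hv.symm

theorem listColors_cycleSegment (f : ZMod n → ℕ) (u : ZMod n) (m : ℕ) :
    listColors (fun a _ => f a) (cycleSegment u (m + 1)) =
      (Finset.range m).image fun i : ℕ => f (u + i) := by
  ext c
  rw [listColors_eq_toFinset_map_dropLast, dropLast_cycleSegment]
  simp [cycleSegment]

theorem reachK_cycle_iff_card_le [NeZero n] (f : ZMod n → ℕ) (k : ℕ) (u v : ZMod n) :
    ReachK (fun a b => b = a + 1) (fun a _ => f a) k u v ↔
      ((Finset.range (v - u).val).image fun i : ℕ => f (u + i)).card ≤ k := by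
  constructor
  · rintro ⟨l, hl, hk⟩
    obtain ⟨m, hm, rfl, rfl⟩ := hl.exists_eq_cycleSegment
    simpa [Nat.mod_eq_of_lt hm, listColors_cycleSegment] using hk
  · intro hk
    have hpath := isPathFrom_cycleSegment u (ZMod.val_lt (v - u))
    rw [ZMod.natCast_zmod_val, add_sub_cancel] at hpath
    exact ⟨_, hpath, by rwa [listColors_cycleSegment]⟩

end CyclePaths

section PairColoring
variable {n : ℕ}

theorem val_div_two_add_one_or_sub_one [NeZero n] (hn : Even n) (w : ZMod n) :
    (w + 1).val / 2 = w.val / 2 ∨ (w - 1).val / 2 = w.val / 2 := by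
  have hw := ZMod.val_lt w
  rcases Nat.even_or_odd w.val with ⟨a, ha⟩ | ⟨a, ha⟩
  · left
    obtain ⟨b, hb⟩ := hn
    have hw1 : w + 1 = ((w.val + 1 : ℕ) : ZMod n) := by
      rw [Nat.cast_succ, ZMod.natCast_zmod_val]
    rw [hw1, ZMod.val_cast_of_lt (by omega)]
    omega
  · right
    have hw1 : w - 1 = ((w.val - 1 : ℕ) : ZMod n) := by
      rw [Nat.cast_sub (by omega), ZMod.natCast_zmod_val, Nat.cast_one]
    rw [hw1, ZMod.val_cast_of_lt (by omega)]
    omega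

theorem card_image_val_div_two_le [NeZero n] (hn : Even n) (u : ZMod n) (d : ℕ) :
    ((Finset.range d).image fun i : ℕ => (u + i).val / 2).card ≤ d / 2 + 1 := by
  have hsub : ((Finset.range d).image fun i : ℕ => (u + i).val / 2) ⊆
      (Finset.range (d / 2 + 1)).image fun j : ℕ => (u + (2 * j : ℕ)).val / 2 := by
    simp only [Finset.subset_iff, Finset.mem_image, Finset.mem_range]
    rintro _ ⟨i, hi, rfl⟩
    rcases Nat.even_or_odd i with ⟨j, rfl⟩ | ⟨j, rfl⟩
    · exact ⟨j, by omega, by rw [two_mul]⟩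
    · rcases val_div_two_add_one_or_sub_one hn (u + (2 * j + 1 : ℕ)) with h | h
      · exact ⟨j + 1, by omega, by rw [← h]; push_cast; ring_nf⟩
      · exact ⟨j, by omega, by rw [← h]; push_cast; ring_nf⟩
  exact (Finset.card_le_card hsub).trans (Finset.card_image_le.trans (by simp))

theorem exists_ne_val_div_two_eq (v : ZMod n) {c : ℕ} (hc : 2 * c + 1 < n) :
    ∃ w : ZMod n, w ≠ v ∧ w.val / 2 = c := by
  have hval : ∀ i < 2, ((2 * c + i : ℕ) : ZMod n).val = 2 * c + i :=
    fun i hi => ZMod.val_cast_of_lt (by omega)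
  obtain ⟨i, hi, hne⟩ : ∃ i < 2, ((2 * c + i : ℕ) : ZMod n) ≠ v := by
    by_contra! h
    have := congrArg ZMod.val ((h 0 two_pos).trans (h 1 one_lt_two).symm)
    rw [hval 0 two_pos, hval 1 one_lt_two] at this
    omega
  exact ⟨_, hne, by rw [hval i hi]; omega⟩

end PairColoring

section ColoredCycle
variable {k : ℕ}

theorem val_neg_one_two_mul_add_two : (-1 : ZMod (2 * k + 2)).val = 2 * k + 1 :=
  ZMod.val_neg_one _

theorem reachK_of_val_sub_lt {u v : ZMod (2 * k + 2)} (h : (v - u).val < 2 * k) :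
    ReachK (fun a b => b = a + 1) (fun a _ => a.val / 2) k u v := by
  rw [reachK_cycle_iff_card_le]
  exact (card_image_val_div_two_le ⟨k + 1, by ring⟩ u _).trans (by omega)

theorem reachK_or_reachK_of_ne (hk : 2 ≤ k) {u v : ZMod (2 * k + 2)} (h : u ≠ v) :
    ReachK (fun a b => b = a + 1) (fun a _ => a.val / 2) k u v ∨
      ReachK (fun a b => b = a + 1) (fun a _ => a.val / 2) k v u := by
  have hsum : (v - u).val + (u - v).val = 2 * k + 2 := by
    rw [← neg_sub, ZMod.neg_val, if_neg (sub_ne_zero.mpr h)]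
    have := ZMod.val_lt (u - v)
    omega
  by_cases hd : (v - u).val < 2 * k
  · exact .inl (reachK_of_val_sub_lt hd)
  · exact .inr (reachK_of_val_sub_lt (by omega))

theorem not_reachK_add_one_self (v : ZMod (2 * k + 2)) :
    ¬ ReachK (fun a b => b = a + 1) (fun a _ => a.val / 2) k (v + 1) v := by
  rw [reachK_cycle_iff_card_le, not_le, sub_add_cancel_left, val_neg_one_two_mul_add_two]
  suffices Finset.range (k + 1) ⊆ _ from (Finset.card_range (k + 1)).symm.trans_le
    (Finset.card_le_card this)
  intro c hc
  rw [Finset.mem_range] at hc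
  obtain ⟨w, hwv, rfl⟩ := exists_ne_val_div_two_eq (c := c) v (by omega)
  have hne : (w - (v + 1)).val ≠ 2 * k + 1 := fun h => hwv <| by
    have := ZMod.val_injective _ (h.trans val_neg_one_two_mul_add_two.symm)
    linear_combination this
  have hlt := ZMod.val_lt (w - (v + 1))
  refine Finset.mem_image.mpr ⟨(w - (v + 1)).val, Finset.mem_range.mpr (by omega), ?_⟩
  rw [ZMod.natCast_zmod_val, add_sub_cancel]

end ColoredCycle

/-- The directed cycle on `2k+2` vertices, with the arcs `(u_{2i}, u_{2i+1})` and
`(u_{2i+1}, u_{2i+2})` colored `i` (a `(k+1)`-coloring), has no `k`-colored kernel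
whenever `k ≥ 2`. -/
theorem stmt_0 (k : ℕ) (hk : 2 ≤ k) :
    ¬ ∃ K : Set (ZMod (2 * k + 2)),
      IsKColoredKernel (fun u v => v = u + 1) (fun u _ => u.val / 2) k K := by
  have : Fact (1 < 2 * k + 2) := ⟨by omega⟩
  rintro ⟨K, hindep, habsorb⟩
  have hK : K.Subsingleton := fun u hu v hv => by_contra fun hne =>
    (reachK_or_reachK_of_ne hk hne).elim (hindep u hu v hv hne) (hindep v hv u hu (Ne.symm hne))
  obtain ⟨v, hv⟩ : K.Nonempty := by
    by_contra hempty
    obtain ⟨w, hw, -⟩ := habsorb 0 fun h0 => hempty ⟨0, h0⟩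
    exact hempty ⟨w, hw⟩
  obtain ⟨w, hw, hreach⟩ := habsorb (v + 1) fun h => add_eq_left.not.mpr one_ne_zero (hK h hv)
  exact not_reachK_add_one_self v (hK hw hv ▸ hreach)
end

section
/- Let D be an arc-colored digraph such that for all vertices u,v, if there exists a directed path from u to v then there exists a directed path from u to v using at most k colors. Then D has a k'-colored kernel for every k' ≥ k. -/
variable {V : Type*}

/-!
Under the hypothesis, every directed path can be replaced by one using at most `k ≤ k'` colors,
so `k'`-colored reachability is plain reachability, i.e. the reflexive transitive closure of the
arc relation. A `k'`-colored kernel is therefore a kernel by directed paths, which exists by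
Berge's argument: in the finite preorder of reachability, pick one vertex in each terminal
strong component.
-/

theorem IsPathFrom.reflTransGen {A : V → V → Prop} {u v : V} {l : List V}
    (hl : IsPathFrom A u v l) : Relation.ReflTransGen A u v := by
  obtain ⟨hchain, -, hhead, hlast⟩ := hl
  have hne : l ≠ [] := by rintro rfl; simp at hhead
  rw [List.head?_eq_some_head hne, Option.some_inj] at hhead
  rw [List.getLast?_eq_some_getLast hne, Option.some_inj] at hlast
  exact hhead ▸ hlast ▸ List.relationReflTransGen_of_exists_isChain l hchain hne

theorem Reach.refl (A : V → V → Prop) (u : V) : Reach A u u :=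
  ⟨[u], List.isChain_singleton u, List.nodup_singleton u, rfl, rfl⟩

-- If `w` already lies on the path, cutting the path at `w` keeps it free of repeated vertices.
theorem Reach.head {A : V → V → Prop} {w u v : V} (hwu : A w u) (huv : Reach A u v) :
    Reach A w v := by
  obtain ⟨l, hchain, hnodup, hhead, hlast⟩ := huv
  by_cases hw : w ∈ l
  · obtain ⟨s, t, rfl⟩ := List.append_of_mem hw
    refine ⟨w :: t, (List.isChain_append.mp hchain).2.1,
      hnodup.sublist (List.sublist_append_right s (w :: t)), rfl, ?_⟩
    rwa [List.getLast?_append_of_ne_nil s (List.cons_ne_nil w t)] at hlast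
  · cases l with
    | nil => simp at hhead
    | cons c t =>
      obtain rfl : c = u := Option.some_inj.mp hhead
      exact ⟨w :: c :: t, hchain.cons_cons hwu, List.nodup_cons.mpr ⟨hw, hnodup⟩, rfl,
        by rwa [List.getLast?_cons_cons]⟩

theorem reach_iff_reflTransGen {A : V → V → Prop} {u v : V} :
    Reach A u v ↔ Relation.ReflTransGen A u v := by
  refine ⟨fun ⟨l, hl⟩ => hl.reflTransGen, fun h => ?_⟩
  induction h using Relation.ReflTransGen.head_induction_on with
  | refl => exact Reach.refl A v
  | head hwu _ ih => exact ih.head hwu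

theorem ReachK.reach {A : V → V → Prop} {col : V → V → ℕ} {k : ℕ} {u v : V}
    (h : ReachK A col k u v) : Reach A u v :=
  let ⟨l, hl, _⟩ := h; ⟨l, hl⟩

theorem ReachK.mono {A : V → V → Prop} {col : V → V → ℕ} {k k' : ℕ} {u v : V}
    (h : ReachK A col k u v) (hk : k ≤ k') : ReachK A col k' u v :=
  let ⟨l, hl, hcard⟩ := h; ⟨l, hl, hcard.trans hk⟩

theorem exists_isAntichain_forall_exists_le {α : Type*} [Preorder α] [Finite α] :
    ∃ K : Set α, IsAntichain (· ≤ ·) K ∧ ∀ a, ∃ b ∈ K, a ≤ b := by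
  have : Finite (Antisymmetrization α (· ≤ ·)) := Quotient.finite _
  refine ⟨ofAntisymmetrization (· ≤ ·) '' {p | IsMax p}, ?_, fun a => ?_⟩
  · rintro _ ⟨p, hp, rfl⟩ _ ⟨q, -, rfl⟩ hne hle
    rw [ofAntisymmetrization_le_ofAntisymmetrization_iff] at hle
    exact hne (congrArg _ (hle.antisymm (hp hle)))
  · obtain ⟨p, hap, hp⟩ := Finite.exists_le_maximal (p := fun _ => True)
      (a := toAntisymmetrization (· ≤ ·) a) trivial
    refine ⟨_, ⟨p, fun q hpq => hp.2 trivial hpq, rfl⟩, ?_⟩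
    rwa [← toAntisymmetrization_ofAntisymmetrization (· ≤ ·) p,
      toAntisymmetrization_le_toAntisymmetrization_iff] at hap

theorem exists_isAntichain_forall_exists_rel {α : Type*} [Finite α] (r : α → α → Prop)
    [IsPreorder α r] : ∃ K : Set α, IsAntichain r K ∧ ∀ a, ∃ b ∈ K, r a b :=
  letI : Preorder α := { le := r, le_refl := refl_of r, le_trans := fun _ _ _ => trans_of r }
  exists_isAntichain_forall_exists_le

theorem stmt_1_general [Fintype V] (A : V → V → Prop) (col : V → V → ℕ) (k : ℕ)
    (h : ∀ u v : V, Reach A u v → ReachK A col k u v) :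
    ∀ k', k ≤ k' → ∃ K : Set V, IsKColoredKernel A col k' K := by
  intro k' hk'
  have hreachK : ∀ u v, ReachK A col k' u v ↔ Relation.ReflTransGen A u v := fun u v =>
    ⟨fun huv => reach_iff_reflTransGen.mp huv.reach,
      fun huv => (h u v (reach_iff_reflTransGen.mpr huv)).mono hk'⟩
  obtain ⟨K, hindep, hcover⟩ := exists_isAntichain_forall_exists_rel (Relation.ReflTransGen A)
  refine ⟨K, fun u hu v hv huv => ?_, fun u _ => ?_⟩
  · rw [hreachK]
    exact hindep hu hv huv
  · simpa only [hreachK] using hcover u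

/-- If whenever `v` is reachable from `u` there is a directed path from `u` to `v`
using at most `k` colors, then `D` has a `k'`-colored kernel for every `k' ≥ k`. -/
theorem stmt_1 [Fintype V] [Nonempty V] (A : V → V → Prop) (col : V → V → ℕ) (k : ℕ)
    (h : ∀ u v : V, Reach A u v → ReachK A col k u v) :
    ∀ k', k ≤ k' → ∃ K : Set V, IsKColoredKernel A col k' K :=
  stmt_1_general A col k h
end

section
/- Let D be an arc-colored digraph such that every directed cycle of D is monochromatic. If T1 is a directed path from u to v and T2 is a directed path from v to u, then the set of colors appearing on T1 equals the set of colors appearing on T2. -/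
variable {V : Type*}

/-!
Induct on the length of `T₂`. Let `w` be the first vertex after `v` on `T₂` that lies on `T₁`.
The piece of `T₁` from `w` to `v` and the piece of `T₂` from `v` to `w` meet only at their
ends, so together they form a cycle; it is monochromatic, so the two pieces carry the same single
color. The remaining pieces, `T₁` from `u` to `w` and `T₂` from `w` to `u`, have equal color sets
by induction, as the second one is shorter than `T₂`.
-/

lemma Finset.eq_of_card_union_le_one {α : Type*} [DecidableEq α] {X Y : Finset α}
    (hX : X.Nonempty) (hY : Y.Nonempty) (h : (X ∪ Y).card ≤ 1) : X = Y := by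
  have : Nonempty α := ⟨hX.choose⟩
  obtain ⟨x, hx⟩ := Finset.card_le_one_iff_subset_singleton.1 h
  rw [hX.subset_singleton_iff.1 (Finset.subset_union_left.trans hx),
    hY.subset_singleton_iff.1 (Finset.subset_union_right.trans hx)]

section Digraph

variable {A : V → V → Prop} (col : V → V → ℕ)

lemma listColors_singleton (a : V) : listColors col [a] = ∅ := rfl

lemma listColors_cons_cons (a b : V) (l : List V) :
    listColors col (a :: b :: l) = insert (col a b) (listColors col (b :: l)) := by
  simp [listColors]

lemma listColors_append_cons :
    ∀ (s : List V) (w : V) (t : List V),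
      listColors col (s ++ w :: t) = listColors col (s ++ [w]) ∪ listColors col (w :: t)
  | [], w, t => by simp [listColors_singleton]
  | [a], w, t => by
      simp only [List.cons_append, List.nil_append, listColors_cons_cons, listColors_singleton,
        Finset.insert_union, Finset.empty_union]
  | a :: b :: s, w, t => by
      simp only [List.cons_append, listColors_cons_cons, Finset.insert_union]
      rw [← List.cons_append, listColors_append_cons (b :: s) w t, List.cons_append]

variable {col}

namespace IsPathFrom

variable {u v w : V} {l s t : List V}

lemma ne_nil (h : IsPathFrom A u v l) : l ≠ [] := by
  rintro rfl
  simp [IsPathFrom] at h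

lemma eq_singleton_of_self (h : IsPathFrom A u u l) : l = [u] := by
  obtain ⟨-, hnodup, hhead, hlast⟩ := h
  match l, hnodup, hhead, hlast with
  | [a], _, hhead, _ => simpa using hhead
  | a :: b :: r, hnodup, hhead, hlast =>
    obtain rfl : a = u := by simpa using hhead
    rw [List.getLast?_cons_cons] at hlast
    exact absurd (List.mem_of_getLast? hlast) (List.nodup_cons.1 hnodup).1

lemma split (h : IsPathFrom A u v (s ++ w :: t)) :
    IsPathFrom A u w (s ++ [w]) ∧ IsPathFrom A w v (w :: t) := by
  obtain ⟨hchain, hnodup, hhead, hlast⟩ := h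
  obtain ⟨hchain₁, hchain₂⟩ := List.isChain_split.1 hchain
  refine ⟨⟨hchain₁, hnodup.sublist (by simp), ?_, by simp⟩,
    ⟨hchain₂, hnodup.sublist (by simp), rfl, ?_⟩⟩
  · cases s <;> simpa using hhead
  · rwa [List.getLast?_append_of_ne_nil _ (List.cons_ne_nil w t)] at hlast

lemma listColors_nonempty (h : IsPathFrom A u v l) (huv : u ≠ v) :
    (listColors col l).Nonempty := by
  obtain ⟨-, -, hhead, hlast⟩ := h
  match l, hhead, hlast with
  | [a], hhead, hlast => simp_all
  | a :: b :: r, _, _ => exact ⟨col a b, by simp [listColors_cons_cons]⟩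

end IsPathFrom

section InternallyDisjoint

variable {v w : V} {P s : List V}

lemma isCycle_append_of_isPathFrom (hP : IsPathFrom A w v P)
    (hQ : IsPathFrom A v w (v :: (s ++ [w]))) (hdisj : ∀ x ∈ s, x ∉ P) :
    IsCycle A (P ++ s) := by
  have hPne := hP.ne_nil
  obtain ⟨hchainP, hnodupP, hheadP, hlastP⟩ := hP
  obtain ⟨hchainQ, hnodupQ, -, -⟩ := hQ
  rw [← List.cons_append] at hchainQ hnodupQ
  obtain ⟨hchain_vs, -, hclose⟩ := List.isChain_append.1 hchainQ
  refine ⟨by simp [hPne], ?_, ?_, ?_⟩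
  · refine List.isChain_append.2 ⟨hchainP, hchain_vs.tail, ?_⟩
    rw [hlastP]
    rintro x hx
    obtain rfl := Option.mem_some_iff.1 hx
    exact (List.isChain_cons.1 hchain_vs).1
  · exact List.nodup_append.2 ⟨hnodupP,
      (List.nodup_cons.1 (hnodupQ.sublist (List.sublist_append_left _ _))).2,
      fun a ha b hb hab => hdisj b hb (hab ▸ ha)⟩
  · intro a b ha hb
    rw [List.head?_append_of_ne_nil _ hPne, hheadP, Option.some_inj] at hb
    subst hb
    have hlast : (P ++ s).getLast? = (v :: s).getLast? := by
      rw [List.getLast?_append, List.getLast?_cons, hlastP]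
      cases s.getLast? <;> rfl
    exact hclose a (hlast ▸ ha) _ rfl

lemma cycleColors_append (hhead : P.head? = some w) (hlast : P.getLast? = some v) :
    cycleColors col (P ++ s) = listColors col P ∪ listColors col (v :: (s ++ [w])) := by
  obtain ⟨d, rfl⟩ := List.getLast?_eq_some_iff.1 hlast
  have htake : (d ++ [v] ++ s).take 1 = [w] := by
    cases d <;> simp_all
  rw [cycleColors, htake, List.append_assoc, List.append_assoc, List.singleton_append,
    listColors_append_cons]

/-- `P` followed by the interior `s` of the return path is a cycle, hence monochromatic. -/
lemma listColors_eq_of_internally_disjoint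
    (hmono : ∀ l : List V, IsCycle A l → (cycleColors col l).card ≤ 1)
    (hP : IsPathFrom A w v P) (hQ : IsPathFrom A v w (v :: (s ++ [w])))
    (hdisj : ∀ x ∈ s, x ∉ P) (hwv : w ≠ v) :
    listColors col P = listColors col (v :: (s ++ [w])) := by
  apply Finset.eq_of_card_union_le_one (hP.listColors_nonempty hwv)
    (hQ.listColors_nonempty hwv.symm)
  rw [← cycleColors_append hP.2.2.1 hP.2.2.2]
  exact hmono _ (isCycle_append_of_isPathFrom hP hQ hdisj)

end InternallyDisjoint

theorem listColors_eq_of_isPathFrom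
    (hmono : ∀ l : List V, IsCycle A l → (cycleColors col l).card ≤ 1)
    {u v : V} {T₁ T₂ : List V} (h₁ : IsPathFrom A u v T₁) (h₂ : IsPathFrom A v u T₂) :
    listColors col T₁ = listColors col T₂ := by
  classical
  by_cases huv : u = v
  · subst huv
    rw [h₁.eq_singleton_of_self, h₂.eq_singleton_of_self]
  obtain ⟨rest, rfl⟩ : ∃ rest, T₂ = v :: rest := by
    obtain ⟨-, -, hhead, -⟩ := h₂
    exact List.head?_eq_some_iff.1 hhead
  obtain ⟨w, s, t, rfl, hw, hs⟩ : ∃ w s t, rest = s ++ w :: t ∧ w ∈ T₁ ∧ ∀ x ∈ s, x ∉ T₁ := by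
    cases hfind : rest.find? (· ∈ T₁) with
    | none =>
      have hu : u ∈ rest := (List.mem_cons.1 (List.mem_of_getLast? h₂.2.2.2)).resolve_left huv
      exact absurd (List.mem_of_mem_head? h₁.2.2.1) (by simpa using List.find?_eq_none.1 hfind u hu)
    | some w =>
      obtain ⟨hw, s, t, rfl, hs⟩ := List.find?_eq_some_iff_append.1 hfind
      exact ⟨w, s, t, rfl, by simpa using hw, by simpa using hs⟩
  obtain ⟨s₁, t₁, rfl⟩ := List.append_of_mem hw
  obtain ⟨hT₁u, hT₁v⟩ := h₁.split
  obtain ⟨hT₂v, hT₂u⟩ := (show IsPathFrom A v u ((v :: s) ++ w :: t) from h₂).split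
  have hwv : w ≠ v := by
    rintro rfl
    exact (List.nodup_cons.1 h₂.2.1).1 (by simp)
  have hloop : listColors col (w :: t₁) = listColors col (v :: (s ++ [w])) :=
    listColors_eq_of_internally_disjoint hmono hT₁v hT₂v
      (fun x hx hx' => hs x hx (List.mem_append_right _ hx')) hwv
  have hrec : listColors col (s₁ ++ [w]) = listColors col (w :: t) :=
    listColors_eq_of_isPathFrom hmono hT₁u hT₂u
  calc listColors col (s₁ ++ w :: t₁)
      = listColors col (s₁ ++ [w]) ∪ listColors col (w :: t₁) := listColors_append_cons ..
    _ = listColors col (v :: s ++ [w]) ∪ listColors col (w :: t) := by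
      rw [hrec, hloop, Finset.union_comm, List.cons_append]
    _ = listColors col (v :: (s ++ w :: t)) := by
      rw [← listColors_append_cons, List.cons_append]
termination_by T₂.length
decreasing_by simp_all

end Digraph

/-- If every directed cycle of `D` is monochromatic, then any directed path from `u`
to `v` and any directed path from `v` to `u` use exactly the same set of colors. -/
theorem stmt_5 (A : V → V → Prop) (col : V → V → ℕ)
    (h : ∀ l : List V, IsCycle A l → (cycleColors col l).card ≤ 1)
    (u v : V) (T1 T2 : List V)
    (h1 : IsPathFrom A u v T1) (h2 : IsPathFrom A v u T2) :
    listColors col T1 = listColors col T2 :=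
  listColors_eq_of_isPathFrom h h1 h2
end

section
/- Let D be an arc-colored quasi-transitive digraph and k ≥ 3. If there is a directed path from u to v using at most k colors, and there is no directed path from v to u using at most k colors, then (u,v) is an arc of D. -/
variable {V : Type*}

/-!
On a shortest walk `u = f 0 → ⋯ → f n = v` there is no arc `f i → f j` with `j ≥ i + 2`, so
quasi-transitivity applied to `f i → f (i+1) → f (i+2)` yields the backward arc `f (i+2) → f i`;
chaining these, again by quasi-transitivity, gives `f n → f (n - 2j)`. Hence if `(u,v)` is not an
arc, `v` reaches `u` in at most three arcs: directly if `n` is even, and along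
`v → f 1 → f 2 → u` if `n` is odd. Such a walk contains a path with at most three arcs, hence at
most `3 ≤ k` colours.
-/

def IsQuasiTransitive (A : V → V → Prop) : Prop :=
  ∀ u v w : V, u ≠ w → A u v → A v w → A u w ∨ A w u

/-- Only the values `f 0, …, f n` matter. -/
def IsWalk (A : V → V → Prop) (f : ℕ → V) (n : ℕ) : Prop :=
  ∀ i < n, A (f i) (f (i + 1))

def IsShortestWalk (A : V → V → Prop) (f : ℕ → V) (n : ℕ) : Prop :=
  IsWalk A f n ∧ ∀ g m, IsWalk A g m → g 0 = f 0 → g m = f n → n ≤ m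

section Walks

variable {A : V → V → Prop}

lemma isWalk_getD {l : List V} (hl : l.IsChain A) (d : V) :
    IsWalk A (fun i => l.getD i d) (l.length - 1) := by
  intro i hi
  simp only [List.getD_eq_getElem _ _ (show i < l.length by omega),
    List.getD_eq_getElem _ _ (show i + 1 < l.length by omega)]
  exact List.isChain_iff_getElem.mp hl i (by omega)

lemma IsPathFrom.exists_isWalk {u v : V} {l : List V} (hl : IsPathFrom A u v l) :
    ∃ f n, IsWalk A f n ∧ f 0 = u ∧ f n = v := by
  obtain ⟨hchain, -, hu, hv⟩ := hl
  refine ⟨_, _, isWalk_getD hchain v, ?_, ?_⟩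
  · rw [List.getD_eq_getElem?_getD, ← List.head?_eq_getElem?, hu, Option.getD_some]
  · rw [List.getD_eq_getElem?_getD, ← List.getLast?_eq_getElem?, hv, Option.getD_some]

lemma IsWalk.shortcut {f : ℕ → V} {n i d : ℕ} (hf : IsWalk A f n) (hn : i + d + 1 ≤ n)
    (hA : A (f i) (f (i + d + 1))) :
    ∃ g, IsWalk A g (n - d) ∧ g 0 = f 0 ∧ g (n - d) = f n := by
  refine ⟨fun m => if m ≤ i then f m else f (m + d), fun t ht => ?_, by simp, ?_⟩
  · rcases lt_trichotomy t i with h | rfl | h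
    · simp only [if_pos h.le, show t + 1 ≤ i from h]
      exact hf t (by omega)
    · simp only [le_refl, if_true, show ¬ t + 1 ≤ t by omega, if_false,
        show t + 1 + d = t + d + 1 by omega]
      exact hA
    · simp only [show ¬ t ≤ i by omega, show ¬ t + 1 ≤ i by omega, if_false,
        show t + 1 + d = t + d + 1 by omega]
      exact hf _ (by omega)
  · simp only [show ¬ n - d ≤ i by omega, if_false, show n - d + d = n by omega]

lemma IsWalk.exists_isShortestWalk {f : ℕ → V} {n : ℕ} (hf : IsWalk A f n) :
    ∃ g m, IsShortestWalk A g m ∧ g 0 = f 0 ∧ g m = f n := by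
  classical
  have hex : ∃ m g, IsWalk A g m ∧ g 0 = f 0 ∧ g m = f n := ⟨n, f, hf, rfl, rfl⟩
  obtain ⟨g, hg, hg0, hgm⟩ := Nat.find_spec hex
  exact ⟨g, _, ⟨hg, fun g' m hg' h0 hm =>
    Nat.find_min' hex ⟨g', hg', h0.trans hg0, hm.trans hgm⟩⟩, hg0, hgm⟩

namespace IsShortestWalk

variable {f : ℕ → V} {n : ℕ}

lemma ne (hf : IsShortestWalk A f n) {i j : ℕ} (hij : i < j) (hj : j ≤ n) : f i ≠ f j := by
  intro heq
  rcases hj.lt_or_eq with hj | rfl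
  · obtain ⟨g, hg, hg0, hgn⟩ := hf.1.shortcut (i := i) (d := j - i) (by omega)
      (by rw [heq, show i + (j - i) + 1 = j + 1 by omega]; exact hf.1 j hj)
    have := hf.2 g _ hg hg0 hgn
    omega
  · have := hf.2 f i (fun t ht => hf.1 t (by omega)) rfl heq
    omega

lemma not_arc (hf : IsShortestWalk A f n) {i j : ℕ} (hij : i + 2 ≤ j) (hj : j ≤ n) :
    ¬ A (f i) (f j) := by
  intro hA
  obtain ⟨g, hg, hg0, hgn⟩ := hf.1.shortcut (i := i) (d := j - i - 1) (by omega)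
    (by rwa [show i + (j - i - 1) + 1 = j by omega])
  have := hf.2 g _ hg hg0 hgn
  omega

lemma arc_add_two (hA : IsQuasiTransitive A) (hf : IsShortestWalk A f n) {i : ℕ}
    (hi : i + 2 ≤ n) : A (f (i + 2)) (f i) :=
  (hA _ _ _ (hf.ne (by omega) hi) (hf.1 i (by omega)) (hf.1 (i + 1) (by omega))).resolve_left
    (hf.not_arc le_rfl hi)

lemma arc_sub_two_mul (hA : IsQuasiTransitive A) (hf : IsShortestWalk A f n) :
    ∀ j, 2 * (j + 1) ≤ n → A (f n) (f (n - 2 * (j + 1)))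
  | 0, h => by simpa [show n - 2 + 2 = n by omega] using hf.arc_add_two hA (i := n - 2) (by omega)
  | j + 1, h => by
    have h1 := arc_sub_two_mul hA hf j (by omega)
    have h2 := hf.arc_add_two hA (i := n - 2 * (j + 2)) (by omega)
    rw [show n - 2 * (j + 2) + 2 = n - 2 * (j + 1) by omega] at h2
    exact (hA _ _ _ (hf.ne (by omega) le_rfl).symm h1 h2).resolve_right
      (hf.not_arc (by omega) le_rfl)

lemma exists_back_walk (hA : IsQuasiTransitive A) (hf : IsShortestWalk A f n) (hn : 2 ≤ n) :
    ∃ g m, m ≤ 3 ∧ IsWalk A g m ∧ g 0 = f n ∧ g m = f 0 := by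
  obtain ⟨j, rfl | rfl⟩ := Nat.even_or_odd' n
  · have hback : A (f (2 * j)) (f 0) := by
      simpa [show 2 * j - 2 * (j - 1 + 1) = 0 by omega] using
        hf.arc_sub_two_mul hA (j - 1) (by omega)
    exact ⟨_, _, by simp, isWalk_getD (l := [f (2 * j), f 0]) (by simpa) (f 0),
      rfl, rfl⟩
  · have hback : A (f (2 * j + 1)) (f 1) := by
      simpa [show 2 * j + 1 - 2 * (j - 1 + 1) = 1 by omega] using
        hf.arc_sub_two_mul hA (j - 1) (by omega)
    have hpath : [f (2 * j + 1), f 1, f 2, f 0].IsChain A := by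
      simpa [hback] using ⟨hf.1 1 (by omega), hf.arc_add_two hA (i := 0) (by omega)⟩
    exact ⟨_, _, le_rfl, isWalk_getD hpath (f 0), rfl, rfl⟩

end IsShortestWalk

lemma IsWalk.exists_back_walk_of_not_arc (hA : IsQuasiTransitive A) {f : ℕ → V} {n : ℕ}
    (hf : IsWalk A f n) (h : ¬ A (f 0) (f n)) :
    ∃ g m, m ≤ 3 ∧ IsWalk A g m ∧ g 0 = f n ∧ g m = f 0 := by
  obtain ⟨g, m, hg, hg0, hgm⟩ := hf.exists_isShortestWalk
  rw [← hg0, ← hgm] at h ⊢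
  match m, hg with
  | 0, hg => exact ⟨g, 0, by omega, fun _ h => absurd h (Nat.not_lt_zero _), rfl, rfl⟩
  | 1, hg => exact absurd (hg.1 0 one_pos) h
  | m + 2, hg => exact hg.exists_back_walk hA (by omega)

lemma IsShortestWalk.isPathFrom {f : ℕ → V} {n : ℕ} (hf : IsShortestWalk A f n) :
    IsPathFrom A (f 0) (f n) ((List.range (n + 1)).map f) := by
  refine ⟨?_, List.nodup_range.map_on fun i hi j hj hij => ?_, by simp [List.range_succ_eq_map],
    by simp [List.range_succ]⟩
  · show List.IsChain A _
    rw [List.isChain_map, List.isChain_range_succ]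
    exact hf.1
  · simp only [List.mem_range] at hi hj
    rcases lt_trichotomy i j with h | h | h
    · exact absurd hij (hf.ne h (by omega))
    · exact h
    · exact absurd hij.symm (hf.ne h (by omega))

lemma card_listColors_le (col : V → V → ℕ) (l : List V) :
    (listColors col l).card ≤ l.length - 1 := by
  simpa [listColors] using List.toFinset_card_le ((l.zip l.tail).map fun p => col p.1 p.2)

lemma reachK_of_isWalk (col : V → V → ℕ) {k : ℕ} {f : ℕ → V} {n : ℕ} (hf : IsWalk A f n)
    (hn : n ≤ k) : ReachK A col k (f 0) (f n) := by
  obtain ⟨g, m, hg, hg0, hgm⟩ := hf.exists_isShortestWalk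
  have hmn : m ≤ n := hg.2 f n hf hg0.symm hgm.symm
  refine hg0 ▸ hgm ▸ ⟨_, hg.isPathFrom, ?_⟩
  calc (listColors col _).card ≤ _ := card_listColors_le col _
    _ ≤ k := by simp only [List.length_map, List.length_range]; omega

end Walks

/-- In an arc-colored quasi-transitive digraph, for `k ≥ 3`, if there is a directed
path from `u` to `v` using at most `k` colors but no directed path from `v` to `u`
using at most `k` colors, then `(u,v)` is an arc. -/
theorem stmt_11 (A : V → V → Prop) (col : V → V → ℕ)
    (hqt : ∀ u v w : V, u ≠ w → A u v → A v w → A u w ∨ A w u)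
    (k : ℕ) (hk : 3 ≤ k) (u v : V)
    (h1 : ReachK A col k u v) (h2 : ¬ ReachK A col k v u) :
    A u v := by
  by_contra huv
  obtain ⟨l, hl, -⟩ := h1
  obtain ⟨f, n, hf, rfl, rfl⟩ := hl.exists_isWalk
  obtain ⟨g, m, hm, hg, hg0, hgm⟩ := hf.exists_back_walk_of_not_arc hqt huv
  exact h2 (hg0 ▸ hgm ▸ reachK_of_isWalk col hg (hm.trans hk))
end

section
/- Let D be an arc-colored 3-quasi-transitive digraph. Then D has a k-colored kernel for every k ≥ 4. -/
/-!
Call `v` good if every vertex reaching `v` reaches it in at most four steps. In a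
3-quasi-transitive digraph a shortest walk `u → ⋯ → v` of length five forces the arc `v → u`,
so a vertex `v` that is not good has an out-neighbour `w` with `d(w, v) = 5`. Stepping on in
this way from bad vertex to bad vertex would, by finiteness, close a cycle on which no arc
`c i → c (i+1)` can be reversed within three steps. Quasi-transitivity rules that out: it
propagates the arcs `c 1 → c 2`, `c 1 → c 4`, `c 1 → c 6`, … around the cycle until one of
them ends next to `c 0`. Hence every vertex reaches a good vertex, and choosing one good vertex
in each terminal strong component gives a `k`-colored kernel for every `k ≥ 4`: walks of
length at most four use at most four colors, and no path joins two terminal components.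
-/

variable {V : Type*}

open Relation

def WalkLen (A : V → V → Prop) : ℕ → V → V → Prop
  | 0, u, v => u = v
  | n + 1, u, v => ∃ w, A u w ∧ WalkLen A n w v

def ReachesWithin (A : V → V → Prop) (n : ℕ) (u v : V) : Prop :=
  ∃ m ≤ n, WalkLen A m u v

def IsGeodesic (A : V → V → Prop) (x : ℕ → V) (m : ℕ) : Prop :=
  (∀ i < m, A (x i) (x (i + 1))) ∧ ∀ n < m, ¬ WalkLen A n (x 0) (x m)

def IsThreeQuasiTransitive (A : V → V → Prop) : Prop :=
  ∀ a b c d : V, a ≠ b → a ≠ c → a ≠ d → b ≠ c → b ≠ d → c ≠ d →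
    A a b → A b c → A c d → A a d ∨ A d a

variable {A : V → V → Prop} {u v w : V} {m n : ℕ}

namespace WalkLen

theorem single (h : A u v) : WalkLen A 1 u v := ⟨v, h, rfl⟩

theorem append (h₁ : WalkLen A m u v) (h₂ : WalkLen A n v w) : WalkLen A (m + n) u w := by
  induction m generalizing u with
  | zero => cases h₁; simpa using h₂
  | succ m ih =>
    obtain ⟨z, huz, hz⟩ := h₁
    rw [Nat.succ_add]
    exact ⟨z, huz, ih hz⟩

theorem exists_fun (h : WalkLen A m u v) :
    ∃ x : ℕ → V, x 0 = u ∧ x m = v ∧ ∀ i < m, A (x i) (x (i + 1)) := by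
  induction m generalizing u with
  | zero => exact ⟨fun _ => v, h.symm, rfl, by omega⟩
  | succ m ih =>
    obtain ⟨w, huw, hw⟩ := h
    obtain ⟨x, rfl, hxm, hx⟩ := ih hw
    refine ⟨fun i => Nat.casesOn i u x, rfl, hxm, ?_⟩
    rintro (_ | i) hi
    · exact huw
    · exact hx i (by omega)

end WalkLen

theorem ReachesWithin.mono (hmn : m ≤ n) (h : ReachesWithin A m u v) : ReachesWithin A n u v :=
  let ⟨k, hk, hw⟩ := h
  ⟨k, hk.trans hmn, hw⟩

theorem exists_walkLen_of_reflTransGen (h : ReflTransGen A u v) : ∃ n, WalkLen A n u v := by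
  induction h using ReflTransGen.head_induction_on with
  | refl => exact ⟨0, rfl⟩
  | head huw _ ih =>
    obtain ⟨n, hn⟩ := ih
    exact ⟨n + 1, _, huw, hn⟩

theorem walkLen_of_arcs {x : ℕ → V} (hx : ∀ i < m, A (x i) (x (i + 1))) {i j : ℕ}
    (hij : i ≤ j) (hjm : j ≤ m) : WalkLen A (j - i) (x i) (x j) := by
  obtain ⟨d, rfl⟩ := Nat.exists_eq_add_of_le hij
  rw [Nat.add_sub_cancel_left]
  induction d generalizing i with
  | zero => rfl
  | succ d ih =>
    refine ⟨x (i + 1), hx i (by omega), ?_⟩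
    simpa [Nat.add_right_comm i 1 d, Nat.add_assoc] using ih (i := i + 1) (by omega) (by omega)

namespace IsGeodesic

variable {x : ℕ → V}

theorem not_walkLen (hx : IsGeodesic A x m) {i j : ℕ} (hij : i ≤ j) (hjm : j ≤ m)
    (hn : n < j - i) : ¬ WalkLen A n (x i) (x j) := fun h =>
  hx.2 _ (by omega) (((walkLen_of_arcs hx.1 (Nat.zero_le i) (by omega)).append h).append
    (walkLen_of_arcs hx.1 hjm le_rfl))

theorem ne (hx : IsGeodesic A x m) {i j : ℕ} (hij : i < j := by omega) (hjm : j ≤ m := by omega) :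
    x i ≠ x j :=
  fun h => hx.not_walkLen hij.le hjm (Nat.sub_pos_of_lt hij) (h ▸ rfl)

theorem shift (hx : IsGeodesic A x m) {i t : ℕ} (h : i + t ≤ m) :
    IsGeodesic A (fun s => x (i + s)) t :=
  ⟨fun s hs => hx.1 (i + s) (by omega),
    fun n hn => hx.not_walkLen (Nat.le_add_right i t) h (by omega)⟩

end IsGeodesic

theorem exists_isGeodesic (h : WalkLen A n u v) :
    ∃ x m, m ≤ n ∧ IsGeodesic A x m ∧ x 0 = u ∧ x m = v := by
  classical
  have hex : ∃ m, WalkLen A m u v := ⟨n, h⟩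
  obtain ⟨x, hx0, hxm, hx⟩ := (Nat.find_spec hex).exists_fun
  refine ⟨x, _, Nat.find_min' hex h, ⟨hx, fun k hk => ?_⟩, hx0, hxm⟩
  rw [hx0, hxm]
  exact Nat.find_min hex hk

theorem exists_reflTransGen_terminal [Finite V] (A : V → V → Prop) (x : V) :
    ∃ t, ReflTransGen A x t ∧ ∀ w, ReflTransGen A t w → ReflTransGen A w t := by
  obtain ⟨t, hxt, hmin⟩ := Set.exists_min_image {t | ReflTransGen A x t}
    (fun t => {y | ReflTransGen A t y}.ncard) (Set.toFinite _) ⟨x, .refl⟩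
  refine ⟨t, hxt, fun w htw => by_contra fun hwt => (hmin w (hxt.trans htw)).not_gt ?_⟩
  exact Set.ncard_lt_ncard ⟨fun y hy => htw.trans hy, fun hsub => hwt (hsub .refl)⟩

namespace IsThreeQuasiTransitive

variable (hA : IsThreeQuasiTransitive A)
include hA

theorem back_arc_of_isGeodesic_three {x : ℕ → V} (hx : IsGeodesic A x 3) : A (x 3) (x 0) :=
  (hA _ _ _ _ hx.ne hx.ne hx.ne hx.ne hx.ne hx.ne (hx.1 0 (by norm_num)) (hx.1 1 (by norm_num))
    (hx.1 2 (by norm_num))).resolve_left fun h => hx.2 1 (by norm_num) (.single h)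

theorem back_arc_of_isGeodesic_five {x : ℕ → V} (hx : IsGeodesic A x 5) : A (x 5) (x 0) := by
  have h30 : A (x 3) (x 0) := by
    simpa using hA.back_arc_of_isGeodesic_three (hx.shift (i := 0) (t := 3) (by norm_num))
  have h52 : A (x 5) (x 2) :=
    hA.back_arc_of_isGeodesic_three (hx.shift (i := 2) (t := 3) (by norm_num))
  exact (hA _ _ _ _ hx.ne.symm hx.ne.symm hx.ne.symm hx.ne hx.ne.symm hx.ne.symm
    h52 (hx.1 2 (by norm_num)) h30).resolve_right fun h => hx.2 1 (by norm_num) (.single h)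

theorem exists_arc_not_reachesWithin_four (huv : ReflTransGen A u v)
    (hfar : ¬ ReachesWithin A 4 u v) : ∃ w, A v w ∧ ¬ ReachesWithin A 4 w v := by
  obtain ⟨n, hn⟩ := exists_walkLen_of_reflTransGen huv
  obtain ⟨x, m, -, hx, rfl, rfl⟩ := exists_isGeodesic hn
  have hm : 5 ≤ m := by
    by_contra! hm
    exact hfar ⟨m, by omega, walkLen_of_arcs hx.1 (Nat.zero_le m) le_rfl⟩
  refine ⟨x (m - 5), ?_,
    fun ⟨k, hk, hw⟩ => hx.not_walkLen (Nat.sub_le m 5) le_rfl (by omega) hw⟩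
  simpa [Nat.sub_add_cancel hm] using
    hA.back_arc_of_isGeodesic_five (hx.shift (i := m - 5) (t := 5) (by omega))

theorem exists_reachesWithin_three_of_cycle {c : ℕ → V} {L : ℕ} (hL : 0 < L)
    (hclosed : c L = c 0) (hne : ∀ a b, a < b → b < a + L → c a ≠ c b)
    (harc : ∀ i < L, A (c i) (c (i + 1))) : ∃ i < L, ReachesWithin A 3 (c (i + 1)) (c i) := by
  by_contra! hfar
  have ne : ∀ i j, 1 ≤ i → i < j → j ≤ L → c i ≠ c j :=
    fun i j _ _ _ => hne i j (by omega) (by omega)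
  -- else `c (2a+4) → c 1 → c (2a+2) → c (2a+3)` would reverse the arc `c (2a+3) → c (2a+4)`
  have arc_even : ∀ a, 2 * a + 2 ≤ L → A (c 1) (c (2 * a + 2)) := by
    intro a
    induction a with
    | zero => exact fun h => harc 1 (by omega)
    | succ a ih =>
      intro h
      have h1 := ih (by omega)
      rcases hA _ _ _ _ (ne _ _ le_rfl (by omega) (by omega)) (ne _ _ le_rfl (by omega) (by omega))
        (ne _ _ le_rfl (by omega) (by omega)) (ne _ _ (by omega) (by omega) (by omega))
        (ne _ _ (by omega) (by omega) (by omega)) (ne _ _ (by omega) (by omega) (by omega))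
        h1 (harc (2 * a + 2) (by omega)) (harc (2 * a + 3) (by omega)) with h | h
      · exact h
      · exact (hfar (2 * a + 3) (by omega) ⟨3, le_rfl,
          (((WalkLen.single h).append (.single h1)).append (.single (harc _ (by omega))))⟩).elim
  obtain ⟨a, rfl | rfl⟩ := Nat.even_or_odd' L
  · obtain ⟨b, rfl⟩ : ∃ b, a = b + 1 := ⟨a - 1, by omega⟩
    exact hfar 0 hL ⟨1, by norm_num, .single (hclosed ▸ arc_even b (by omega))⟩
  · rcases Nat.eq_zero_or_pos a with rfl | ha
    · exact hfar 0 hL ⟨0, by norm_num, hclosed⟩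
    · obtain ⟨b, rfl⟩ : ∃ b, a = b + 1 := ⟨a - 1, by omega⟩
      exact hfar 0 hL ⟨2, by norm_num, hclosed ▸
        (WalkLen.single (arc_even b (by omega))).append (.single (harc _ (by omega)))⟩

theorem exists_reachesWithin_three_of_seq [Finite V] {g : ℕ → V}
    (harc : ∀ n, A (g n) (g (n + 1))) : ∃ n, ReachesWithin A 3 (g (n + 1)) (g n) := by
  classical
  have hrep : ∃ d, 0 < d ∧ ∃ i, g (i + d) = g i := by
    obtain ⟨a, b, hab, hg⟩ := Finite.exists_ne_map_eq_of_infinite g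
    rcases Nat.lt_or_gt_of_ne hab with h | h
    · exact ⟨b - a, by omega, a, by rw [Nat.add_sub_cancel' h.le, hg]⟩
    · exact ⟨a - b, by omega, b, by rw [Nat.add_sub_cancel' h.le, hg]⟩
  obtain ⟨hL, i, hi⟩ := Nat.find_spec hrep
  obtain ⟨n, -, hn⟩ := hA.exists_reachesWithin_three_of_cycle (c := fun n => g (i + n)) hL hi
    (fun a b hab hb he => Nat.find_min hrep (m := b - a) (by omega)
      ⟨by omega, i + a, by rw [Nat.add_assoc, Nat.add_sub_cancel' hab.le, he]⟩)
    (fun n _ => harc _)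
  exact ⟨i + n, hn⟩

theorem exists_reflTransGen_forall_reachesWithin_four [Finite V] (t : V) :
    ∃ v, ReflTransGen A t v ∧ ∀ u, ReflTransGen A u v → ReachesWithin A 4 u v := by
  by_contra! hcon
  have step : ∀ v : {v // ReflTransGen A t v}, ∃ w : {v // ReflTransGen A t v},
      A v w ∧ ¬ ReachesWithin A 4 w v := by
    rintro ⟨v, htv⟩
    obtain ⟨u, huv, hfar⟩ := hcon v htv
    obtain ⟨w, hvw, hwv⟩ := hA.exists_arc_not_reachesWithin_four huv hfar
    exact ⟨⟨w, htv.tail hvw⟩, hvw, hwv⟩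
  choose f hf using step
  have hsucc : ∀ n, f^[n + 1] ⟨t, .refl⟩ = f (f^[n] ⟨t, .refl⟩) :=
    fun n => Function.iterate_succ_apply' f n _
  obtain ⟨n, hn⟩ :=
    hA.exists_reachesWithin_three_of_seq (g := fun n => (f^[n] ⟨t, .refl⟩ : V))
      fun n => hsucc n ▸ (hf _).1
  exact (hsucc n ▸ (hf _).2) (hn.mono (by norm_num))

theorem exists_pairwise_not_reflTransGen_forall_reachesWithin_four [Finite V] :
    ∃ K : Set V, K.Pairwise (fun u v => ¬ ReflTransGen A u v) ∧
      ∀ x, ∃ v ∈ K, ReachesWithin A 4 x v := by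
  obtain ⟨n, ⟨e⟩⟩ := Finite.exists_equiv_fin V
  set G := {v | (∀ w, ReflTransGen A v w → ReflTransGen A w v) ∧
    ∀ u, ReflTransGen A u v → ReachesWithin A 4 u v}
  refine ⟨{v ∈ G | ∀ w ∈ G, ReflTransGen A v w → e v ≤ e w}, ?_, fun x => ?_⟩
  · rintro u ⟨hu, humin⟩ v ⟨hv, hvmin⟩ huv h
    exact huv (e.injective (le_antisymm (humin v hv h) (hvmin u hu (hu.1 v h))))
  obtain ⟨t, hxt, ht⟩ := exists_reflTransGen_terminal A x
  obtain ⟨v, htv, hv⟩ := hA.exists_reflTransGen_forall_reachesWithin_four t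
  have hvG : v ∈ G := ⟨fun w hvw => (ht w (htv.trans hvw)).trans htv, hv⟩
  obtain ⟨r, ⟨hrG, hvr⟩, hrmin⟩ :=
    Set.exists_min_image {y ∈ G | ReflTransGen A v y} e (Set.toFinite _) ⟨v, hvG, .refl⟩
  exact ⟨r, ⟨hrG, fun w hw hrw => hrmin w ⟨hw, hvr.trans hrw⟩⟩,
    hrG.2 x ((hxt.trans htv).trans hvr)⟩

end IsThreeQuasiTransitive

theorem reflTransGen_of_reachK {col : V → V → ℕ} {k : ℕ} (h : ReachK A col k u v) :
    ReflTransGen A u v := by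
  obtain ⟨l, ⟨hl, -, hu, hv⟩, -⟩ := h
  have hne : l ≠ [] := by rintro rfl; simp at hu
  rw [List.head?_eq_some_head hne, Option.some_inj] at hu
  rw [List.getLast?_eq_some_getLast hne, Option.some_inj] at hv
  exact hu ▸ hv ▸ List.relationReflTransGen_of_exists_isChain l hl hne

theorem reachK_of_reachesWithin {col : V → V → ℕ} {k : ℕ} (hnk : n ≤ k)
    (h : ReachesWithin A n u v) : ReachK A col k u v := by
  obtain ⟨m, hmn, hw⟩ := h
  obtain ⟨x, m', hm', hx, rfl, rfl⟩ := exists_isGeodesic hw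
  refine ⟨(List.range (m' + 1)).map x,
    ⟨?_, ?_, by simp [List.head?_range], by simp [List.getLast?_range]⟩, ?_⟩
  · exact List.isChain_map x |>.mpr <| (List.isChain_range_succ _ _).mpr hx.1
  · refine List.nodup_range.map_on fun i hi j hj hij => ?_
    simp only [List.mem_range] at hi hj
    by_contra h
    rcases Nat.lt_or_gt_of_ne h with h | h
    · exact hx.ne h (by omega) hij
    · exact hx.ne h (by omega) hij.symm
  · calc (listColors col ((List.range (m' + 1)).map x)).card
        ≤ (((List.range (m' + 1)).map x).zip ((List.range (m' + 1)).map x).tail).length :=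
          (List.toFinset_card_le _).trans (List.length_map _).le
      _ ≤ k := by simp; omega

theorem stmt_15_general [Fintype V] (A : V → V → Prop) (col : V → V → ℕ)
    (h3qt : ∀ a b c d : V, a ≠ b → a ≠ c → a ≠ d → b ≠ c → b ≠ d → c ≠ d →
      A a b → A b c → A c d → A a d ∨ A d a) :
    ∀ k : ℕ, 4 ≤ k → ∃ K : Set V, IsKColoredKernel A col k K := by
  intro k hk
  obtain ⟨K, hindep, habsorb⟩ :=
    IsThreeQuasiTransitive.exists_pairwise_not_reflTransGen_forall_reachesWithin_four (A := A) h3qt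
  refine ⟨K, fun u hu v hv huv h => hindep hu hv huv (reflTransGen_of_reachK h), fun x _ => ?_⟩
  obtain ⟨v, hv, hxv⟩ := habsorb x
  exact ⟨v, hv, reachK_of_reachesWithin hk hxv⟩

/-- Every arc-colored `3`-quasi-transitive digraph has a `k`-colored kernel for every
`k ≥ 4`. -/
theorem stmt_15 [Fintype V] [Nonempty V] (A : V → V → Prop) (col : V → V → ℕ)
    (h3qt : ∀ a b c d : V, a ≠ b → a ≠ c → a ≠ d → b ≠ c → b ≠ d → c ≠ d →
      A a b → A b c → A c d → A a d ∨ A d a) :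
    ∀ k : ℕ, 4 ≤ k → ∃ K : Set V, IsKColoredKernel A col k K :=
  stmt_15_general A col h3qt
end

section
/- Let D be an arc-colored locally in-tournament digraph such that every arc of D belongs to a directed cycle and every directed cycle of D uses at most k colors. If there is a directed path from u to v, then there is a directed path from v to u using at most k colors. -/
/-!
In a locally in-semicomplete digraph whose arcs all lie on cycles, a vertex `x ∉ C` with an arc
`x → c` into a cycle `C` can be absorbed into a cycle through all of `C`. Going around `C` from
`c`, either two consecutive vertices `y → z` satisfy `y → x → z` (because `y` and `x` are both
in-neighbours of `z`, hence adjacent), and `x` is inserted between them; or `x` dominates `C`.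
In the latter case a cycle through the arc `x → c` leaves `C` for the last time at some `z` and
runs back to `x` outside `C`, and the arc from `x` to the successor of `z` closes a cycle through
`C` and `x`. Absorbing the vertices of a path from `u` to `v` one by one, starting with a cycle
through its last arc, gives a cycle through `u` and `v`, and its segment from `v` to `u` uses
only colors of that cycle.
-/

variable {V : Type*}

namespace List

variable {α : Type*} {R : α → α → Prop} {l : List α}

theorem isChain_iff_forall_mem_zip_tail :
    ∀ {l : List α}, l.IsChain R ↔ ∀ p ∈ l.zip l.tail, R p.1 p.2
  | [] | [_] => by simp
  | a :: b :: l => by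
    rw [isChain_cons_cons, isChain_iff_forall_mem_zip_tail]
    simp

theorem IsChain.and {S : α → α → Prop} (hR : l.IsChain R) (hS : l.IsChain S) :
    l.IsChain (fun a b => R a b ∧ S a b) :=
  isChain_iff_forall_mem_zip_tail.2 fun p hp =>
    ⟨isChain_iff_forall_mem_zip_tail.1 hR p hp, isChain_iff_forall_mem_zip_tail.1 hS p hp⟩

theorem infix_of_mem_zip_tail {a b : α} (h : (a, b) ∈ l.zip l.tail) : [a, b] <:+: l :=
  isChain_iff_forall_mem_zip_tail.1 (isChain_isInfix l) _ h

theorem exists_isRotated_cons_of_mem {a : α} (h : a ∈ l) : ∃ m, l ~r a :: m := by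
  obtain ⟨s, t, rfl⟩ := append_of_mem h
  exact ⟨t ++ s, isRotated_append⟩

theorem exists_isRotated_of_infix_append_take {y z : α} (h : [y, z] <:+: l ++ l.take 1) :
    ∃ m, l ~r y :: m ∧ (m ++ [y]).head? = some z := by
  obtain ⟨s, t, hst⟩ := h
  cases l with
  | nil => simp at hst
  | cons a l =>
    rcases eq_nil_or_concat t with rfl | ⟨t, w, rfl⟩
    · have hst : (s ++ [y]) ++ [z] = (a :: l) ++ [a] := by simpa using hst
      obtain ⟨hs, hz⟩ := append_inj' hst rfl
      refine ⟨s, hs ▸ isRotated_append, ?_⟩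
      cases s <;> simp_all
    · have hst : (s ++ y :: z :: t) ++ [w] = (a :: l) ++ [a] := by simpa using hst
      obtain ⟨hs, -⟩ := append_inj' hst rfl
      exact ⟨z :: t ++ s, hs ▸ isRotated_append, rfl⟩

theorem exists_eq_append_cons_forall_not {p : α → Prop} :
    ∀ {l : List α}, (∃ a ∈ l, p a) → ∃ s z t, l = s ++ z :: t ∧ p z ∧ ∀ b ∈ t, ¬ p b
  | a :: l, h => by
    by_cases hl : ∃ b ∈ l, p b
    · obtain ⟨s, z, t, rfl, hz, ht⟩ := exists_eq_append_cons_forall_not hl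
      exact ⟨a :: s, z, t, rfl, hz, ht⟩
    · push Not at hl
      obtain ⟨b, hb, hpb⟩ := h
      obtain rfl | hb := mem_cons.1 hb
      · exact ⟨[], b, l, rfl, hpb, hl⟩
      · exact absurd hpb (hl b hb)

end List

namespace Cycle

variable {α : Type*} {R : α → α → Prop}

theorem chain_coe_iff {l : List α} : Chain R (l : Cycle α) ↔ (l ++ l.take 1).IsChain R := by
  cases l <;> simp

end Cycle

open List Relation

section Digraph

variable {A : V → V → Prop}

def LocallyInTournament (A : V → V → Prop) : Prop :=
  ∀ u v w : V, v ≠ w → A v u → A w u → (A v w ↔ ¬ A w v)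

def LocallyInSemicomplete (A : V → V → Prop) : Prop :=
  ∀ u v w : V, v ≠ w → A v u → A w u → A v w ∨ A w v

def ArcsLieOnCycles (A : V → V → Prop) : Prop :=
  ∀ u v : V, A u v → ∃ l : List V, IsCycle A l ∧ ArcOfCycle l u v

theorem LocallyInTournament.locallyInSemicomplete (h : LocallyInTournament A) :
    LocallyInSemicomplete A := fun u v w hvw hv hw => by
  have := h u v w hvw hv hw
  tauto

theorem listColors_subset_iff {col : V → V → ℕ} {S : Finset ℕ} {l : List V} :
    listColors col l ⊆ S ↔ l.IsChain (fun a b => col a b ∈ S) := by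
  simp only [listColors, Finset.subset_iff, mem_toFinset, mem_map, isChain_iff_forall_mem_zip_tail]
  exact ⟨fun h p hp => h ⟨p, hp, rfl⟩, fun h _ ⟨p, hp, hc⟩ => hc ▸ h p hp⟩

theorem IsPathFrom.mono {B : V → V → Prop} {u v : V} {l : List V} (hAB : ∀ a b, A a b → B a b)
    (h : IsPathFrom A u v l) : IsPathFrom B u v l :=
  ⟨h.1.imp hAB, h.2⟩

theorem Reach.reflTransGen {u v : V} (h : Reach A u v) : ReflTransGen A u v := by
  obtain ⟨l, hch, -, hu, hv⟩ := h
  obtain ⟨l, rfl⟩ : ∃ m, l = u :: m := by cases l <;> simp_all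
  exact relationReflTransGen_of_exists_isChain_cons l hch
    (by simpa [getLast?_eq_some_getLast] using hv)

theorem ReachK.refl (col : V → V → ℕ) (k : ℕ) (u : V) : ReachK A col k u u :=
  ⟨[u], ⟨.singleton u, nodup_singleton u, rfl, rfl⟩, by simp [listColors]⟩

theorem isCycle_iff {l : List V} : IsCycle A l ↔ l ≠ [] ∧ Cycle.Chain A l ∧ l.Nodup := by
  cases l with
  | nil => simp [IsCycle]
  | cons a l =>
    rw [Cycle.chain_coe_cons, ← cons_append, isChain_append]
    constructor
    · rintro ⟨-, hch, hnd, hcl⟩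
      exact ⟨cons_ne_nil a l, ⟨hch, isChain_singleton a, fun x hx y hy => hcl x y hx hy⟩, hnd⟩
    · rintro ⟨-, ⟨hch, -, hcl⟩, hnd⟩
      exact ⟨cons_ne_nil a l, hch, hnd, fun x y hx hy => hcl x hx y hy⟩

theorem IsCycle.of_isRotated {l l' : List V} (h : IsCycle A l) (hl : l ~r l') : IsCycle A l' := by
  obtain ⟨hne, hch, hnd⟩ := isCycle_iff.1 h
  refine isCycle_iff.2 ⟨?_, Cycle.coe_eq_coe.2 hl ▸ hch, hl.nodup_iff.1 hnd⟩
  rintro rfl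
  exact hne (isRotated_nil_iff.1 hl)

theorem ArcOfCycle.infix {l : List V} {u v : V} (h : ArcOfCycle l u v) :
    [u, v] <:+: l ++ l.take 1 := by
  rcases h with h | ⟨hu, hv⟩
  · exact (infix_of_mem_zip_tail h).trans (infix_append_left ..)
  · obtain ⟨m, rfl⟩ := getLast?_eq_some_iff.1 hu
    cases m with
    | nil => simp_all
    | cons a m => exact ⟨a :: m, [], by simp_all⟩

theorem ArcOfCycle.mem {l : List V} {u v : V} (h : ArcOfCycle l u v) : u ∈ l ∧ v ∈ l := by
  have hsub : ∀ w ∈ [u, v], w ∈ l := fun w hw => by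
    rcases mem_append.1 (h.infix.subset hw) with hw | hw
    exacts [hw, take_subset 1 l hw]
  exact ⟨hsub u (by simp), hsub v (by simp)⟩

theorem IsCycle.splice {y x : V} {M R : List V} (hC : IsCycle A (y :: M))
    (hR : (y :: (R ++ [x])).IsChain A) (hRnd : (R ++ [x]).Nodup)
    (hdisj : ∀ w ∈ R ++ [x], w ∉ y :: M) (hx : ∀ z ∈ (M ++ [y]).head?, A x z) :
    IsCycle A (y :: (R ++ x :: M)) := by
  obtain ⟨-, hch, hnd⟩ := isCycle_iff.1 hC
  refine isCycle_iff.2 ⟨cons_ne_nil _ _, ?_, ?_⟩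
  · rw [Cycle.chain_coe_cons] at hch ⊢
    have : y :: (R ++ x :: M ++ [y]) = (y :: (R ++ [x])) ++ (M ++ [y]) := by simp
    rw [this]
    refine hR.append hch.tail fun a ha z hz => ?_
    rw [← cons_append, getLast?_concat, Option.mem_some_iff] at ha
    exact ha ▸ hx z hz
  · have hperm : (R ++ [x]) ++ (y :: M) ~ y :: (R ++ x :: M) := by
      simpa using (perm_middle (a := y) (l₁ := R ++ [x]) (l₂ := M))
    exact hperm.nodup_iff.1 (nodup_append.2 ⟨hRnd, hnd, fun a ha b hb hab => hdisj a ha (hab ▸ hb)⟩)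

theorem LocallyInSemicomplete.exists_insertion_or_forall_adj (hA : LocallyInSemicomplete A)
    {x : V} : ∀ {L : List V}, L.IsChain A → x ∉ L → (∀ z ∈ L.getLast?, A x z) →
      (∃ l₁ y z l₂, L = l₁ ++ y :: z :: l₂ ∧ A y x ∧ A x z) ∨ ∀ y ∈ L, A x y
  | [], _, _, _ => Or.inr (by simp)
  | [a], _, _, hlast => Or.inr (by simpa using hlast)
  | a :: b :: L, hL, hx, hlast => by
    rw [isChain_cons_cons] at hL
    rw [getLast?_cons_cons] at hlast
    rcases hA.exists_insertion_or_forall_adj hL.2 (fun h => hx (mem_cons_of_mem a h)) hlast with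
      ⟨l₁, y, z, l₂, hsplit, hyx, hxz⟩ | hdom
    · exact Or.inl ⟨a :: l₁, y, z, l₂, by rw [hsplit, cons_append], hyx, hxz⟩
    · have hxb := hdom b mem_cons_self
      rcases hA b a x (fun h => hx (h ▸ mem_cons_self)) hL.1 hxb with hax | hxa
      · exact Or.inl ⟨[], a, b, L, rfl, hax, hxb⟩
      · exact Or.inr (forall_mem_cons.2 ⟨hxa, hdom⟩)

theorem IsCycle.exists_superset_of_forall_adj {C N : List V} {x c : V} (hC : IsCycle A C)
    (hx : x ∉ C) (hdom : ∀ y ∈ C, A x y) (hD : IsCycle A (x :: N)) (hcN : c ∈ N) (hcC : c ∈ C) :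
    ∃ C', IsCycle A C' ∧ x ∈ C' ∧ C ⊆ C' := by
  obtain ⟨P, z, R, rfl, hzC, hRC⟩ :=
    exists_eq_append_cons_forall_not (p := (· ∈ C)) ⟨c, hcN, hcC⟩
  obtain ⟨M, hCM⟩ := exists_isRotated_cons_of_mem hzC
  obtain ⟨-, hDch, hDnd⟩ := isCycle_iff.1 hD
  rw [Cycle.chain_coe_cons] at hDch
  have hchain : (z :: (R ++ [x])).IsChain A := hDch.suffix ⟨x :: P, by simp⟩
  have hnd : (R ++ [x]).Nodup := nodup_append_comm.1 (hDnd.sublist (by simp))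
  have hdisj : ∀ w ∈ R ++ [x], w ∉ z :: M := by
    intro w hw hwM
    rcases mem_append.1 hw with hw | hw
    · exact hRC w hw (hCM.mem_iff.2 hwM)
    · exact hx (hCM.mem_iff.2 (mem_singleton.1 hw ▸ hwM))
  have hxz : ∀ w ∈ (M ++ [z]).head?, A x w := fun w hw =>
    hdom w (hCM.mem_iff.2 (isRotated_concat z M |>.mem_iff.1 (mem_of_mem_head? hw)))
  refine ⟨_, (hC.of_isRotated hCM).splice hchain hnd hdisj hxz, by simp, fun w hw => ?_⟩
  rcases mem_cons.1 (hCM.mem_iff.1 hw) with rfl | hw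
  · exact mem_cons_self
  · simp [hw]

theorem IsCycle.exists_superset_of_adj (hA : LocallyInSemicomplete A) (harc : ArcsLieOnCycles A)
    {C : List V} {x c : V} (hC : IsCycle A C) (hx : x ∉ C) (hcC : c ∈ C) (hxc : A x c) :
    ∃ C', IsCycle A C' ∧ x ∈ C' ∧ C ⊆ C' := by
  obtain ⟨M, hCM⟩ := exists_isRotated_cons_of_mem hcC
  have hcM : IsCycle A (c :: M) := hC.of_isRotated hCM
  have hxcM : x ∉ c :: M := fun h => hx (hCM.mem_iff.2 h)
  have hxM : x ∉ c :: M ++ [c] := fun h => by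
    rcases mem_append.1 h with h | h
    exacts [hxcM h, hxcM (mem_singleton.1 h ▸ mem_cons_self)]
  have hlast : ∀ z ∈ (c :: M ++ [c]).getLast?, A x z := fun z hz => by
    rw [getLast?_concat, Option.mem_some_iff] at hz
    exact hz ▸ hxc
  rcases hA.exists_insertion_or_forall_adj ((isCycle_iff.1 hcM).2.1) hxM hlast with
    ⟨l₁, y, z, l₂, hsplit, hyx, hxz⟩ | hdom
  · obtain ⟨M', hrot, hz⟩ := exists_isRotated_of_infix_append_take (l := c :: M) (y := y) (z := z)
      ⟨l₁, l₂, by simp [hsplit]⟩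
    refine ⟨y :: x :: M', (hcM.of_isRotated hrot).splice (R := []) (by simpa using hyx) (by simp)
      (by simpa [← hrot.mem_iff, hCM.mem_iff] using hx) (by simpa [hz] using hxz), by simp,
      fun w hw => ?_⟩
    rcases mem_cons.1 (hrot.mem_iff.1 (hCM.mem_iff.1 hw)) with rfl | hw
    · exact mem_cons_self
    · simp [hw]
  · obtain ⟨D, hD, hxcD⟩ := harc x c hxc
    obtain ⟨N, hDN, hN⟩ := exists_isRotated_of_infix_append_take hxcD.infix
    have hcN : c ∈ N := by
      cases N with
      | nil => exact absurd (by simpa using hN : x = c) (fun h => hx (h ▸ hcC))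
      | cons d N => exact (Option.some.inj hN) ▸ mem_cons_self
    exact hC.exists_superset_of_forall_adj hx
      (fun y hy => hdom y (subset_append_left _ _ (hCM.mem_iff.1 hy))) (hD.of_isRotated hDN) hcN hcC

theorem exists_isCycle_of_transGen (hA : LocallyInSemicomplete A) (harc : ArcsLieOnCycles A)
    {a b : V} (h : TransGen A a b) : ∃ C, IsCycle A C ∧ a ∈ C ∧ b ∈ C := by
  induction h using TransGen.head_induction_on with
  | single hab =>
    obtain ⟨C, hC, habC⟩ := harc _ _ hab
    exact ⟨C, hC, habC.mem⟩
  | @head a c hac _ ih =>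
    obtain ⟨C, hC, hcC, hbC⟩ := ih
    by_cases haC : a ∈ C
    · exact ⟨C, hC, haC, hbC⟩
    · obtain ⟨C', hC', haC', hCC'⟩ := hC.exists_superset_of_adj hA harc haC hcC hac
      exact ⟨C', hC', haC', hCC' hbC⟩

theorem Cycle.Chain.exists_isPathFrom {R : V → V → Prop} {l : List V} (hl : Cycle.Chain R l)
    (hnd : l.Nodup) {u v : V} (hu : u ∈ l) (hv : v ∈ l) : ∃ p, IsPathFrom R v u p := by
  obtain ⟨m, hrot⟩ := exists_isRotated_cons_of_mem hv
  rw [Cycle.coe_eq_coe.2 hrot, Cycle.chain_coe_cons] at hl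
  obtain ⟨s, t, hst⟩ := append_of_mem (hrot.mem_iff.1 hu)
  have hpre : s ++ [u] <+: v :: m := ⟨t, by simp [hst]⟩
  refine ⟨s ++ [u], (hl.prefix ⟨[v], by simp⟩).prefix hpre,
    (hrot.nodup_iff.1 hnd).sublist hpre.sublist, ?_, getLast?_concat⟩
  cases s <;> simp_all

theorem IsCycle.reachK {col : V → V → ℕ} {k : ℕ} {C : List V} (hC : IsCycle A C)
    (hk : (cycleColors col C).card ≤ k) {u v : V} (hu : u ∈ C) (hv : v ∈ C) :
    ReachK A col k v u := by
  obtain ⟨-, hch, hnd⟩ := isCycle_iff.1 hC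
  have hboth : Cycle.Chain (fun a b => A a b ∧ col a b ∈ cycleColors col C) C :=
    Cycle.chain_coe_iff.2 ((Cycle.chain_coe_iff.1 hch).and (listColors_subset_iff.1 subset_rfl))
  obtain ⟨p, hp⟩ := hboth.exists_isPathFrom hnd hu hv
  exact ⟨p, hp.mono fun _ _ h => h.1,
    (Finset.card_le_card (listColors_subset_iff.2 (hp.1.imp fun _ _ h => h.2))).trans hk⟩

end Digraph

/-- In an arc-colored locally in-tournament digraph in which every arc lies on a
directed cycle and every directed cycle uses at most `k` colors: if there is a
directed path from `u` to `v`, then there is a directed path from `v` to `u` using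
at most `k` colors. -/
theorem stmt_17 (A : V → V → Prop) (col : V → V → ℕ) (k : ℕ)
    (hin : ∀ u v w : V, v ≠ w → A v u → A w u → (A v w ↔ ¬ A w v))
    (harc : ∀ u v : V, A u v → ∃ l : List V, IsCycle A l ∧ ArcOfCycle l u v)
    (hcyc : ∀ l : List V, IsCycle A l → (cycleColors col l).card ≤ k)
    (u v : V) (h : Reach A u v) :
    ReachK A col k v u := by
  rcases reflTransGen_iff_eq_or_transGen.1 h.reflTransGen with rfl | huv
  · exact ReachK.refl col k _
  · obtain ⟨C, hC, huC, hvC⟩ := exists_isCycle_of_transGen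
      (LocallyInTournament.locallyInSemicomplete hin) harc huv
    exact hC.reachK (hcyc C hC) huC hvC
end
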